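/- Let A be a clone over ℕ and B a right A-algebra. Define B^A to be the set B with the new action b∗f := b[x_1, (f 1)⁺, (f 2)⁺, …] (position 1 goes to x_1, position j+1 goes to (f j)⁺). Then: (1) B^A is a right A-algebra; (2) the map ev : B^A × A → B, ev(b,a) = b[a, x_1, x_2, x_3, …], is a homomorphism of right A-algebras, where B^A × A carries the componentwise action; (3) B^A together with ev is the exponent of B by A in the category of right A-algebras: for every right A-algebra T and every homomorphism of right A-algebras h : T × A → B (componentwise action on T × A), there is a unique homomorphism of right A-algebras H : T → B^A with ev(H t, a) = h(t, a) for all t ∈ T, a ∈ A, namely H(t) = h(t⁺, x_1). -/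
import Mathlib


/-- A clone over the positive integers ℕ = {1,2,3,…}. -/
structure CloneN (A : Type*) where
  sub : A → (ℕ+ → A) → A
  x : ℕ+ → A
  sub_assoc : ∀ (a : A) (f g : ℕ+ → A), sub (sub a f) g = sub a (fun i => sub (f i) g)
  sub_x : ∀ a : A, sub a x = a
  x_sub : ∀ (i : ℕ+) (f : ℕ+ → A), sub (x i) f = f i

/-- A right algebra of a clone over ℕ. -/
structure RightAlgOn (A : Type*) (C : CloneN A) (B : Type*) where
  act : B → (ℕ+ → A) → B
  act_act : ∀ (b : B) (f g : ℕ+ → A), act (act b f) g = act b (fun i => C.sub (f i) g)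
  act_x : ∀ b : B, act b C.x = b

/-- The new action of `B^A` on the set `B`:
`b∗f := b[x_1, (f 1)⁺, (f 2)⁺, …]` where `t⁺ = t[x_2,x_3,…]`. -/
def starAct {A B : Type*} (C : CloneN A) (R : RightAlgOn A C B)
    (b : B) (f : ℕ+ → A) : B :=
  R.act b (fun j =>
    if j = 1 then C.x 1 else C.sub (f (j - 1)) (fun k => C.x (k + 1)))

/-- The evaluation map `ev(b, a) = b[a, x_1, x_2, x_3, …]`. -/
def evMap {A B : Type*} (C : CloneN A) (R : RightAlgOn A C B)
    (b : B) (a : A) : B :=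
  R.act b (fun j => if j = 1 then a else C.x (j - 1))

lemma pnat_succ_ne_one (k : ℕ+) : k + 1 ≠ 1 := by
  intro hc
  have := congrArg PNat.val hc
  simp [PNat.add_coe] at this

lemma pnat_succ_sub_one (k : ℕ+) : k + 1 - 1 = k := by
  simp

lemma pnat_sub_one_add_one {j : ℕ+} (h : j ≠ 1) : j - 1 + 1 = j :=
  PNat.sub_add_of_lt (lt_of_le_of_ne j.one_le (Ne.symm h))

/-- (1) `B^A` (the set `B` with the action `∗`) is a right `A`-algebra;
(2) `ev : B^A × A → B` is a homomorphism of right `A`-algebras;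
(3) `(B^A, ev)` is the exponent of `B` by `A`: for every right `A`-algebra `T` and
every homomorphism `h : T × A → B`, there is a unique homomorphism `H : T → B^A` with
`ev(H t, a) = h(t, a)`, namely `H(t) = h(t⁺, x_1)`. -/
theorem exponent_of_right_algebras {A B T : Type*} (C : CloneN A)
    (R : RightAlgOn A C B) (RT : RightAlgOn A C T) (h : T → A → B)
    (hhom : ∀ (t : T) (a : A) (f : ℕ+ → A),
      R.act (h t a) f = h (RT.act t f) (C.sub a f)) :
    (∀ (b : B) (f g : ℕ+ → A),
      starAct C R (starAct C R b f) g = starAct C R b (fun i => C.sub (f i) g)) ∧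
    (∀ b : B, starAct C R b C.x = b) ∧
    (∀ (b : B) (a : A) (f : ℕ+ → A),
      R.act (evMap C R b a) f = evMap C R (starAct C R b f) (C.sub a f)) ∧
    ((∀ (t : T) (f : ℕ+ → A),
        starAct C R (h (RT.act t (fun k => C.x (k + 1))) (C.x 1)) f =
          h (RT.act (RT.act t f) (fun k => C.x (k + 1))) (C.x 1)) ∧
      (∀ (t : T) (a : A),
        evMap C R (h (RT.act t (fun k => C.x (k + 1))) (C.x 1)) a = h t a)) ∧
    (∀ H : T → B,
      ((∀ (t : T) (f : ℕ+ → A), starAct C R (H t) f = H (RT.act t f)) ∧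
        (∀ (t : T) (a : A), evMap C R (H t) a = h t a)) →
      H = fun t => h (RT.act t (fun k => C.x (k + 1))) (C.x 1)) := by
  refine ⟨?_, ?_, ?_, ⟨?_, ?_⟩, ?_⟩
  · -- (1a) action axiom
    intro b f g
    simp only [starAct, R.act_act]
    congr 1
    funext i
    by_cases hi : i = 1
    · simp [hi, C.x_sub]
    · simp only [if_neg hi, C.sub_assoc]
      congr 1
      funext k
      rw [C.x_sub]
      simp only [pnat_succ_ne_one k, if_false, pnat_succ_sub_one]
  · -- (1b) unit axiom
    intro b
    have : (fun j : ℕ+ =>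
        if j = 1 then C.x 1 else C.sub (C.x (j - 1)) (fun k => C.x (k + 1))) = C.x := by
      funext j
      by_cases hj : j = 1
      · simp [hj]
      · simp [hj, C.x_sub, pnat_sub_one_add_one hj]
    simp [starAct, this, R.act_x]
  · -- (2) ev is a homomorphism
    intro b a f
    simp only [starAct, evMap, R.act_act]
    congr 1
    funext i
    by_cases hi : i = 1
    · simp [hi, C.x_sub]
    · rw [if_neg hi, if_neg hi, C.x_sub, C.sub_assoc]
      have : (fun k : ℕ+ =>
          C.sub (C.x (k + 1)) (fun j => if j = 1 then C.sub a f else C.x (j - 1))) = C.x := by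
        funext k
        rw [C.x_sub]
        simp only [pnat_succ_ne_one k, if_false, pnat_succ_sub_one]
      rw [this, C.sub_x]
  · -- (3a) H is a homomorphism w.r.t. starAct
    intro t f
    simp only [starAct, hhom, C.x_sub, if_pos rfl, RT.act_act]
    congr 2
    funext k
    simp [C.x_sub, pnat_succ_ne_one, pnat_succ_sub_one]
  · -- (3b) ev ∘ H = h
    intro t a
    rw [evMap, hhom, RT.act_act, C.x_sub]
    have : (fun k : ℕ+ =>
        C.sub (C.x (k + 1)) (fun j => if j = 1 then a else C.x (j - 1))) = C.x := by
      funext k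
      rw [C.x_sub]
      simp only [pnat_succ_ne_one k, if_false, pnat_succ_sub_one]
    rw [this, RT.act_x, if_pos rfl]
  · -- (3c) uniqueness
    intro H ⟨h1, h2⟩
    funext t
    rw [← h2 (RT.act t (fun k => C.x (k + 1))) (C.x 1), ← h1 t (fun k => C.x (k + 1))]
    simp only [evMap, starAct, R.act_act]
    have : (fun i : ℕ+ =>
        C.sub (if i = 1 then C.x 1 else C.sub (C.x (i - 1 + 1)) fun k => C.x (k + 1))
          (fun j => if j = 1 then C.x 1 else C.x (j - 1))) = C.x := by
      funext i
      by_cases hi : i = 1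
      · simp [hi, C.x_sub]
      · simp [hi, C.x_sub, pnat_succ_ne_one, pnat_succ_sub_one, pnat_sub_one_add_one hi]
    rw [this, R.act_x]
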